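/- arXiv:1611.05947 — 4 statements merged into one kernel-verified Lean document; each statement's English description precedes it below -/
import Mathlib

section
/- If R is a matrix in SO(3, ℂ) and R - μI has rank at most 1 for some scalar μ ∈ ℂ, then μ = 1 or μ = -1. -/
open Matrix

def SO3 (R : Matrix (Fin 3) (Fin 3) ℂ) : Prop :=
  R * Rᵀ = 1 ∧ Rᵀ * R = 1 ∧ R.det = 1

-- key geometric fact: three independent vectors in ℂ³ have invertible Gram determinant,
-- so two independent vectors cannot span a totally isotropic plane.
lemma not_totally_isotropic (v w : Fin 3 → ℂ)
    (hvw : LinearIndependent ℂ ![v, w])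
    (hv : v ⬝ᵥ v = 0) (hw : w ⬝ᵥ w = 0) (hvw2 : v ⬝ᵥ w = 0) (hwv : w ⬝ᵥ v = 0) : False := by
  -- span of {v, w} is not everything
  have hspan : Submodule.span ℂ (Set.range ![v, w]) ≠ ⊤ := by
    intro htop
    have := finrank_le_of_span_eq_top htop
    simp at this
  obtain ⟨u, hu⟩ : ∃ u, u ∉ Submodule.span ℂ (Set.range ![v, w]) := by
    by_contra hc
    push_neg at hc
    exact hspan (Submodule.eq_top_iff'.mpr hc)
  have hind : LinearIndependent ℂ ![u, v, w] := by
    rw [show (![u, v, w] : Fin 3 → Fin 3 → ℂ) = Fin.cons u ![v, w] from rfl,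
      linearIndependent_fin_cons]
    exact ⟨hvw, hu⟩
  set B : Matrix (Fin 3) (Fin 3) ℂ := Matrix.of ![u, v, w] with hB
  have hBu : IsUnit B := by
    rw [← Matrix.linearIndependent_rows_iff_isUnit]
    exact hind
  have hdet : B.det ≠ 0 := by
    have := hBu.map (Matrix.detMonoidHom (n := Fin 3) (R := ℂ))
    simpa [isUnit_iff_ne_zero] using this
  set G : Matrix (Fin 3) (Fin 3) ℂ := B * Bᵀ with hG
  have hGdet : G.det ≠ 0 := by
    rw [hG, Matrix.det_mul, Matrix.det_transpose]
    exact mul_ne_zero hdet hdet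
  apply hGdet
  have hGe : ∀ i j, G i j = (![u, v, w] i) ⬝ᵥ (![u, v, w] j) := by
    intro i j
    fin_cases i <;> fin_cases j <;>
      simp [hG, hB, Matrix.mul_apply, Matrix.vecMul, Fin.sum_univ_three, dotProduct, Matrix.vecHead, Matrix.vecTail, Matrix.transpose_apply]
  rw [Matrix.det_fin_three]
  have e11 := hGe 1 1; have e12 := hGe 1 2; have e21 := hGe 2 1; have e22 := hGe 2 2
  simp only [Matrix.cons_val_one, Matrix.cons_val_two, Matrix.head_cons, Matrix.tail_cons,
    Matrix.cons_val_zero] at e11 e12 e21 e22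
  rw [e11, e12, e21, e22, hv, hw, hvw2, hwv]
  ring

lemma eigen_sq_one (R : Matrix (Fin 3) (Fin 3) ℂ) (hO : Rᵀ * R = 1) (μ : ℂ)
    (v : Fin 3 → ℂ) (hv : R *ᵥ v = μ • v) (w : Fin 3 → ℂ) (hw : R *ᵥ w = μ • w)
    (hd : v ⬝ᵥ w ≠ 0) : μ ^ 2 = 1 := by
  have key : (R *ᵥ v) ⬝ᵥ (R *ᵥ w) = v ⬝ᵥ w := by
    rw [Matrix.dotProduct_mulVec, ← Matrix.vecMul_transpose, Matrix.vecMul_vecMul, hO,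
      Matrix.vecMul_one]
  rw [hv, hw] at key
  have h2 : (μ ^ 2 - 1) * (v ⬝ᵥ w) = 0 := by
    rw [smul_dotProduct, dotProduct_smul, smul_eq_mul, smul_eq_mul] at key
    linear_combination key
  rcases mul_eq_zero.mp h2 with h' | h'
  · linear_combination h'
  · exact absurd h' hd

theorem stmt_0 (R : Matrix (Fin 3) (Fin 3) ℂ) (hR : SO3 R) (μ : ℂ)
    (h : (R - μ • (1 : Matrix (Fin 3) (Fin 3) ℂ)).rank ≤ 1) :
    μ = 1 ∨ μ = -1 := by
  obtain ⟨h1, h2, h3⟩ := hR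
  set M : Matrix (Fin 3) (Fin 3) ℂ := R - μ • 1 with hM
  -- kernel has dimension ≥ 2
  have hker : 2 ≤ Module.finrank ℂ (LinearMap.ker M.mulVecLin) := by
    have hrn := LinearMap.finrank_range_add_finrank_ker M.mulVecLin
    have hdom : Module.finrank ℂ (Fin 3 → ℂ) = 3 := by simp
    rw [hdom] at hrn
    have : M.rank = Module.finrank ℂ (LinearMap.range M.mulVecLin) := rfl
    omega
  obtain ⟨f, hf⟩ := exists_linearIndependent_of_le_finrank hker
  set v : Fin 3 → ℂ := (f 0 : Fin 3 → ℂ) with hv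
  set w : Fin 3 → ℂ := (f 1 : Fin 3 → ℂ) with hw
  have hfi : LinearIndependent ℂ ![v, w] := by
    have := hf.map' (LinearMap.ker M.mulVecLin).subtype (Submodule.ker_subtype _)
    convert this using 1
    funext i
    fin_cases i <;> rfl
    all_goals rfl
  have heig : ∀ x : Fin 3 → ℂ, M *ᵥ x = 0 → R *ᵥ x = μ • x := by
    intro x hx
    rw [hM, Matrix.sub_mulVec, Matrix.smul_mulVec, Matrix.one_mulVec, sub_eq_zero] at hx
    exact hx
  have hvker : M *ᵥ v = 0 := by
    have := (f 0).2
    rwa [LinearMap.mem_ker] at this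
  have hwker : M *ᵥ w = 0 := by
    have := (f 1).2
    rwa [LinearMap.mem_ker] at this
  have hvw : M *ᵥ (v + w) = 0 := by rw [Matrix.mulVec_add, hvker, hwker, add_zero]
  have hRv := heig v hvker
  have hRw := heig w hwker
  have hsq : μ ^ 2 = 1 := by
    by_cases hc1 : v ⬝ᵥ v ≠ 0
    · exact eigen_sq_one R h2 μ v hRv v hRv hc1
    by_cases hc2 : w ⬝ᵥ w ≠ 0
    · exact eigen_sq_one R h2 μ w hRw w hRw hc2
    by_cases hc3 : v ⬝ᵥ w ≠ 0
    · exact eigen_sq_one R h2 μ v hRv w hRw hc3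
    push_neg at hc1 hc2 hc3
    have hwv : w ⬝ᵥ v = 0 := by rwa [dotProduct_comm]
    exact (not_totally_isotropic v w hfi hc1 hc2 hc3 hwv).elim
  have : (μ - 1) * (μ + 1) = 0 := by linear_combination hsq
  rcases mul_eq_zero.mp this with h' | h'
  · left; linear_combination h'
  · right; linear_combination h'
end

section
/- Let R ∈ SO(3, ℂ) with R ≠ I, and suppose R + I = s·uᵀ for nonzero vectors s, u ∈ ℂ³ with uᵀu ≠ 0. Then s = (2/(uᵀu))·u. -/
open Matrix

theorem stmt_2 (R : Matrix (Fin 3) (Fin 3) ℂ) (hR : SO3 R) (hRI : R ≠ 1)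
    (s u : Fin 3 → ℂ) (hs : s ≠ 0) (hu : u ≠ 0)
    (huu : u ⬝ᵥ u ≠ 0)
    (h : R + 1 = vecMulVec s u) :
    s = (2 / (u ⬝ᵥ u)) • u := by
  obtain ⟨h1, h2, h3⟩ := hR
  have hRe : R = vecMulVec s u - 1 := by exact eq_sub_of_add_eq h
  have h' : (vecMulVec s u - 1) * ((vecMulVec s u)ᵀ - 1) = 1 := by
    rw [hRe] at h1
    simpa [transpose_sub, transpose_one] using h1
  have hAA : vecMulVec s u * (vecMulVec s u)ᵀ = vecMulVec s u + (vecMulVec s u)ᵀ := by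
    calc vecMulVec s u * (vecMulVec s u)ᵀ
        = (vecMulVec s u - 1) * ((vecMulVec s u)ᵀ - 1) + vecMulVec s u + (vecMulVec s u)ᵀ - 1 := by
          noncomm_ring
      _ = vecMulVec s u + (vecMulVec s u)ᵀ := by rw [h']; noncomm_ring
  have hE : ∀ i j, (u ⬝ᵥ u) * (s i * s j) = s i * u j + u i * s j := by
    intro i j
    have hij := congrFun (congrFun hAA i) j
    simp [mul_apply, vecMulVec_apply, transpose_apply, Matrix.add_apply, Fin.sum_univ_three,
      dotProduct] at hij ⊢
    linear_combination hij
  have hcu : ∀ i, (u ⬝ᵥ u) * (s ⬝ᵥ u) * s i = (u ⬝ᵥ u) * s i + (s ⬝ᵥ u) * u i := by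
    intro i
    have e0 := hE i 0; have e1 := hE i 1; have e2 := hE i 2
    simp only [dotProduct, Fin.sum_univ_three] at *
    linear_combination u 0 * e0 + u 1 * e1 + u 2 * e2
  have hcm : ∀ i, (u ⬝ᵥ u) * (s ⬝ᵥ s) * s i = (s ⬝ᵥ u) * s i + (s ⬝ᵥ s) * u i := by
    intro i
    have e0 := hE i 0; have e1 := hE i 1; have e2 := hE i 2
    simp only [dotProduct, Fin.sum_univ_three] at *
    linear_combination s 0 * e0 + s 1 * e1 + s 2 * e2
  have htr : (u ⬝ᵥ u) * (s ⬝ᵥ s) = 2 * (s ⬝ᵥ u) := by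
    have e0 := hE 0 0; have e1 := hE 1 1; have e2 := hE 2 2
    simp only [dotProduct, Fin.sum_univ_three] at *
    linear_combination e0 + e1 + e2
  have hB : ∀ i, (s ⬝ᵥ u) * s i = (s ⬝ᵥ s) * u i := by
    intro i
    linear_combination hcu i * 0 + hcm i - s i * htr
  have hcc : ∀ i, (s ⬝ᵥ u) * ((s ⬝ᵥ u) - 2) * u i = 0 := by
    intro i
    linear_combination (s ⬝ᵥ u) * hcu i - (u ⬝ᵥ u) * ((s ⬝ᵥ u) - 1) * hB i -
      ((s ⬝ᵥ u) - 1) * (u i) * htr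
  obtain ⟨i0, hi0⟩ := Function.ne_iff.mp hu
  replace hi0 : u i0 ≠ 0 := by simpa using hi0
  have hc : (s ⬝ᵥ u) = 0 ∨ (s ⬝ᵥ u) = 2 := by
    rcases mul_eq_zero.mp ((mul_eq_zero.mp (hcc i0)).resolve_right hi0) with h' | h'
    · exact Or.inl h'
    · exact Or.inr (by linear_combination h')
  have hc2 : (s ⬝ᵥ u) = 2 := by
    rcases hc with hc0 | hc2
    · exfalso
      apply hs
      funext i
      have hz : (u ⬝ᵥ u) * s i = 0 := by
        linear_combination -(hcu i) + ((u ⬝ᵥ u) * s i - u i) * hc0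
      exact (mul_eq_zero.mp hz).resolve_left huu
    · exact hc2
  funext i
  have hi := hcu i
  rw [hc2] at hi
  simp only [Pi.smul_apply, smul_eq_mul]
  rw [div_mul_eq_mul_div, eq_div_iff huu]
  linear_combination hi
end

section
/- Let A, B, C be 3×4 complex matrices and x, ℓ', ℓ'' ∈ ℂ³ nonzero vectors. If there is X ∈ ℂ⁴, X ≠ 0, with AX = λx for some λ ∈ ℂ, ℓ'ᵀ(BX) = 0, ℓ''ᵀ(CX) = 0, and AX ≠ 0, then the trilinear form ∑_{ijk} (T_{A,B,C})_{ijk} x_i ℓ'_j ℓ''_k equals 0. -/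
open Matrix

def trifocal (A B C : Matrix (Fin 3) (Fin 4) ℂ) (i j k : Fin 3) : ℂ :=
  (-1 : ℂ) ^ (i : ℕ) *
    (Matrix.of ![A (i.succAbove 0), A (i.succAbove 1), B j, C k]).det

set_option maxHeartbeats 1600000 in
private lemma det_fin_four' (M : Matrix (Fin 4) (Fin 4) ℂ) :
    M.det =
      M 0 0 * (M 1 1 * (M 2 2 * M 3 3 - M 2 3 * M 3 2)
             - M 1 2 * (M 2 1 * M 3 3 - M 2 3 * M 3 1)
             + M 1 3 * (M 2 1 * M 3 2 - M 2 2 * M 3 1))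
    - M 0 1 * (M 1 0 * (M 2 2 * M 3 3 - M 2 3 * M 3 2)
             - M 1 2 * (M 2 0 * M 3 3 - M 2 3 * M 3 0)
             + M 1 3 * (M 2 0 * M 3 2 - M 2 2 * M 3 0))
    + M 0 2 * (M 1 0 * (M 2 1 * M 3 3 - M 2 3 * M 3 1)
             - M 1 1 * (M 2 0 * M 3 3 - M 2 3 * M 3 0)
             + M 1 3 * (M 2 0 * M 3 1 - M 2 1 * M 3 0))
    - M 0 3 * (M 1 0 * (M 2 1 * M 3 2 - M 2 2 * M 3 1)
             - M 1 1 * (M 2 0 * M 3 2 - M 2 2 * M 3 0)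
             + M 1 2 * (M 2 0 * M 3 1 - M 2 1 * M 3 0)) := by
  simp only [det_succ_row_zero, submatrix_apply, submatrix_submatrix, det_unique,
    Fin.default_eq_zero, Function.comp_apply, Fin.sum_univ_succ, Fin.val_zero,
    Fin.zero_succAbove, Fin.val_succ, Fin.val_eq_zero, Fin.succ_succAbove_zero,
    Fin.succ_succAbove_succ, Fin.succ_zero_eq_one, Fin.succ_one_eq_two,
    Finset.univ_unique, Finset.sum_singleton, Fin.sum_univ_zero, pow_zero, pow_succ]
  norm_num [Fin.succAbove, Fin.castSucc, Fin.castAdd, Fin.castLE, Fin.succ, Fin.lt_def]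
  have e2 : (⟨2, by norm_num⟩ : Fin 4) = 2 := rfl
  have e3 : (⟨3, by norm_num⟩ : Fin 4) = 3 := rfl
  simp only [e2, e3]
  ring

private lemma det4 (r0 r1 r2 r3 : Fin 4 → ℂ) :
    (Matrix.of ![r0, r1, r2, r3]).det = (r0 0 * (r1 1 * (r2 2 * r3 3 - r2 3 * r3 2) - r1 2 * (r2 1 * r3 3 - r2 3 * r3 1) + r1 3 * (r2 1 * r3 2 - r2 2 * r3 1)) - r0 1 * (r1 0 * (r2 2 * r3 3 - r2 3 * r3 2) - r1 2 * (r2 0 * r3 3 - r2 3 * r3 0) + r1 3 * (r2 0 * r3 2 - r2 2 * r3 0)) + r0 2 * (r1 0 * (r2 1 * r3 3 - r2 3 * r3 1) - r1 1 * (r2 0 * r3 3 - r2 3 * r3 0) + r1 3 * (r2 0 * r3 1 - r2 1 * r3 0)) - r0 3 * (r1 0 * (r2 1 * r3 2 - r2 2 * r3 1) - r1 1 * (r2 0 * r3 2 - r2 2 * r3 0) + r1 2 * (r2 0 * r3 1 - r2 1 * r3 0))) := by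
  rw [det_fin_four']
  norm_num
  rfl

set_option maxHeartbeats 4000000 in
theorem stmt_9 (A B C : Matrix (Fin 3) (Fin 4) ℂ)
    (x l' l'' : Fin 3 → ℂ) (hx : x ≠ 0) (hl' : l' ≠ 0) (hl'' : l'' ≠ 0)
    (X : Fin 4 → ℂ) (hX : X ≠ 0) (lam : ℂ)
    (h1 : A *ᵥ X = lam • x)
    (h2 : l' ⬝ᵥ (B *ᵥ X) = 0)
    (h3 : l'' ⬝ᵥ (C *ᵥ X) = 0)
    (h4 : A *ᵥ X ≠ 0) :
    ∑ i : Fin 3, ∑ j : Fin 3, ∑ k : Fin 3,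
      trifocal A B C i j k * x i * l' j * l'' k = 0 := by
  have hlam : lam ≠ 0 := by
    rintro rfl
    exact h4 (by rw [h1, zero_smul])
  have hxi : ∀ i, x i = lam⁻¹ * (A i ⬝ᵥ X) := by
    intro i
    have := congrFun h1 i
    simp only [mulVec, Pi.smul_apply, smul_eq_mul] at this
    rw [this]
    field_simp
  simp only [dotProduct, mulVec, Fin.sum_univ_three, Fin.sum_univ_four] at h2 h3
  have s00 : (0 : Fin 3).succAbove 0 = 1 := rfl
  have s01 : (0 : Fin 3).succAbove 1 = 2 := rfl
  have s10 : (1 : Fin 3).succAbove 0 = 0 := rfl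
  have s11 : (1 : Fin 3).succAbove 1 = 2 := rfl
  have s20 : (2 : Fin 3).succAbove 0 = 0 := rfl
  have s21 : (2 : Fin 3).succAbove 1 = 1 := rfl
  simp only [trifocal, Fin.sum_univ_three, s00, s01, s10, s11, s20, s21, det4, hxi,
    dotProduct, Fin.sum_univ_four, Fin.val_zero, Fin.val_one, Fin.val_two,
    pow_zero, pow_one, pow_two]
  linear_combination (lam⁻¹ * (l'' 0 * (A 0 0 * (A 1 1 * (A 2 2 * (C 0) 3 - A 2 3 * (C 0) 2) - A 1 2 * (A 2 1 * (C 0) 3 - A 2 3 * (C 0) 1) + A 1 3 * (A 2 1 * (C 0) 2 - A 2 2 * (C 0) 1)) - A 0 1 * (A 1 0 * (A 2 2 * (C 0) 3 - A 2 3 * (C 0) 2) - A 1 2 * (A 2 0 * (C 0) 3 - A 2 3 * (C 0) 0) + A 1 3 * (A 2 0 * (C 0) 2 - A 2 2 * (C 0) 0)) + A 0 2 * (A 1 0 * (A 2 1 * (C 0) 3 - A 2 3 * (C 0) 1) - A 1 1 * (A 2 0 * (C 0) 3 - A 2 3 * (C 0) 0) + A 1 3 * (A 2 0 * (C 0) 1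 - A 2 1 * (C 0) 0)) - A 0 3 * (A 1 0 * (A 2 1 * (C 0) 2 - A 2 2 * (C 0) 1) - A 1 1 * (A 2 0 * (C 0) 2 - A 2 2 * (C 0) 0) + A 1 2 * (A 2 0 * (C 0) 1 - A 2 1 * (C 0) 0))) + l'' 1 * (A 0 0 * (A 1 1 * (A 2 2 * (C 1) 3 - A 2 3 * (C 1) 2) - A 1 2 * (A 2 1 * (C 1) 3 - A 2 3 * (C 1) 1) + A 1 3 * (A 2 1 * (C 1) 2 - A 2 2 * (C 1) 1)) - A 0 1 * (A 1 0 * (A 2 2 * (C 1) 3 - A 2 3 * (C 1) 2) - A 1 2 * (A 2 0 * (C 1) 3 - A 2 3 * (C 1) 0) + A 1 3 * (A 2 0 * (C 1) 2 - A 2 2 * (C 1) 0)) + A 0 2 * (A 1 0 * (A 2 1 * (C 1) 3 - A 2 3 * (C 1) 1) - A 1 1 * (A 2 0 * (C 1) 3 - A 2 3 * (C 1) 0) + A 1 3 * (A 2 0 * (C 1) 1 - A 2 1 * (C 1) 0)) - A 0 3 * (A 1 0 * (A 2 1 * (C 1) 2 - A 2 2 * (C 1) 1) - A 1 1 * (A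 2 0 * (C 1) 2 - A 2 2 * (C 1) 0) + A 1 2 * (A 2 0 * (C 1) 1 - A 2 1 * (C 1) 0))) + l'' 2 * (A 0 0 * (A 1 1 * (A 2 2 * (C 2) 3 - A 2 3 * (C 2) 2) - A 1 2 * (A 2 1 * (C 2) 3 - A 2 3 * (C 2) 1) + A 1 3 * (A 2 1 * (C 2) 2 - A 2 2 * (C 2) 1)) - A 0 1 * (A 1 0 * (A 2 2 * (C 2) 3 - A 2 3 * (C 2) 2) - A 1 2 * (A 2 0 * (C 2) 3 - A 2 3 * (C 2) 0) + A 1 3 * (A 2 0 * (C 2) 2 - A 2 2 * (C 2) 0)) + A 0 2 * (A 1 0 * (A 2 1 * (C 2) 3 - A 2 3 * (C 2) 1) - A 1 1 * (A 2 0 * (C 2) 3 - A 2 3 * (C 2) 0) + A 1 3 * (A 2 0 * (C 2) 1 - A 2 1 * (C 2) 0)) - A 0 3 * (A 1 0 * (A 2 1 * (C 2) 2 - A 2 2 * (C 2) 1) - A 1 1 * (A 2 0 * (C 2) 2 - A 2 2 * (C 2) 0) + A 1 2 * (A 2 0 * (C 2) 1 - A 2 1 * (C 2) 0))))) * h2 -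 (lam⁻¹ * (l' 0 * (A 0 0 * (A 1 1 * (A 2 2 * (B 0) 3 - A 2 3 * (B 0) 2) - A 1 2 * (A 2 1 * (B 0) 3 - A 2 3 * (B 0) 1) + A 1 3 * (A 2 1 * (B 0) 2 - A 2 2 * (B 0) 1)) - A 0 1 * (A 1 0 * (A 2 2 * (B 0) 3 - A 2 3 * (B 0) 2) - A 1 2 * (A 2 0 * (B 0) 3 - A 2 3 * (B 0) 0) + A 1 3 * (A 2 0 * (B 0) 2 - A 2 2 * (B 0) 0)) + A 0 2 * (A 1 0 * (A 2 1 * (B 0) 3 - A 2 3 * (B 0) 1) - A 1 1 * (A 2 0 * (B 0) 3 - A 2 3 * (B 0) 0) + A 1 3 * (A 2 0 * (B 0) 1 - A 2 1 * (B 0) 0)) - A 0 3 * (A 1 0 * (A 2 1 * (B 0) 2 - A 2 2 * (B 0) 1) - A 1 1 * (A 2 0 * (B 0) 2 - A 2 2 * (B 0) 0) + A 1 2 * (A 2 0 * (B 0) 1 - A 2 1 * (B 0) 0))) + l' 1 * (A 0 0 * (A 1 1 * (A 2 2 * (B 1) 3 - A 2 3 * (B 1) 2) - A 1 2 * (A 2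 1 * (B 1) 3 - A 2 3 * (B 1) 1) + A 1 3 * (A 2 1 * (B 1) 2 - A 2 2 * (B 1) 1)) - A 0 1 * (A 1 0 * (A 2 2 * (B 1) 3 - A 2 3 * (B 1) 2) - A 1 2 * (A 2 0 * (B 1) 3 - A 2 3 * (B 1) 0) + A 1 3 * (A 2 0 * (B 1) 2 - A 2 2 * (B 1) 0)) + A 0 2 * (A 1 0 * (A 2 1 * (B 1) 3 - A 2 3 * (B 1) 1) - A 1 1 * (A 2 0 * (B 1) 3 - A 2 3 * (B 1) 0) + A 1 3 * (A 2 0 * (B 1) 1 - A 2 1 * (B 1) 0)) - A 0 3 * (A 1 0 * (A 2 1 * (B 1) 2 - A 2 2 * (B 1) 1) - A 1 1 * (A 2 0 * (B 1) 2 - A 2 2 * (B 1) 0) + A 1 2 * (A 2 0 * (B 1) 1 - A 2 1 * (B 1) 0))) + l' 2 * (A 0 0 * (A 1 1 * (A 2 2 * (B 2) 3 - A 2 3 * (B 2) 2) - A 1 2 * (A 2 1 * (B 2) 3 - A 2 3 * (B 2) 1) + A 1 3 * (A 2 1 * (B 2) 2 - A 2 2 * (B 2) 1)) - A 0 1 *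 (A 1 0 * (A 2 2 * (B 2) 3 - A 2 3 * (B 2) 2) - A 1 2 * (A 2 0 * (B 2) 3 - A 2 3 * (B 2) 0) + A 1 3 * (A 2 0 * (B 2) 2 - A 2 2 * (B 2) 0)) + A 0 2 * (A 1 0 * (A 2 1 * (B 2) 3 - A 2 3 * (B 2) 1) - A 1 1 * (A 2 0 * (B 2) 3 - A 2 3 * (B 2) 0) + A 1 3 * (A 2 0 * (B 2) 1 - A 2 1 * (B 2) 0)) - A 0 3 * (A 1 0 * (A 2 1 * (B 2) 2 - A 2 2 * (B 2) 1) - A 1 1 * (A 2 0 * (B 2) 2 - A 2 2 * (B 2) 0) + A 1 2 * (A 2 0 * (B 2) 1 - A 2 1 * (B 2) 0))))) * h3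
end

section
/- Let A = [I | 0], B = [R₂ | t₂], C = [R₃ | t₃] be calibrated cameras (R₂, R₃ ∈ SO(3, ℂ), t₂, t₃ ∈ ℂ³), and similarly Ã = [I | 0], B̃ = [R̃₂ | t̃₂], C̃ = [R̃₃ | t̃₃]. Suppose h = [[I, 0], [uᵀ, λ]] ∈ ℂ^{4×4} (with u ∈ ℂ³, λ ∈ ℂ*) satisfies: Bh is a nonzero scalar multiple of B̃ and Ch is a nonzero scalar multiple of C̃. If the centers of A, B, C are linearly independent in ℂ⁴, then u = 0. -/
open Matrix

/-- The camera matrix `[R | t]`. -/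
noncomputable def camMat (R : Matrix (Fin 3) (Fin 3) ℂ) (t : Fin 3 → ℂ) :
    Matrix (Fin 3) (Fin 4) ℂ :=
  Matrix.of fun i => Fin.snoc (R i) (t i)

/-- The center `(-Rᵀt ; 1)` of the calibrated camera `[R | t]`. -/
noncomputable def center (R : Matrix (Fin 3) (Fin 3) ℂ) (t : Fin 3 → ℂ) : Fin 4 → ℂ :=
  Fin.snoc (-(Rᵀ *ᵥ t)) 1

/-- The 4×4 matrix `[[I, 0], [uᵀ, λ]]`. -/
noncomputable def hmat (u : Fin 3 → ℂ) (lam : ℂ) : Matrix (Fin 4) (Fin 4) ℂ :=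
  Matrix.of (Fin.snoc
    (fun i : Fin 3 => Fin.snoc ((1 : Matrix (Fin 3) (Fin 3) ℂ) i) 0)
    (Fin.snoc u lam))

lemma snoc_three {α : Type*} (a : Fin 3 → α) (b : α) :
    (Fin.snoc a b : Fin 4 → α) 3 = b :=
  Fin.snoc_last (α := fun _ => α) (p := a) (x := b)

lemma keylem (R R' : Matrix (Fin 3) (Fin 3) ℂ) (t t' u : Fin 3 → ℂ) (lam c : ℂ)
    (hR : SO3 R) (hR' : SO3 R') (hc : c ≠ 0)
    (h : camMat R t * hmat u lam = c • camMat R' t')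
    (j₀ : Fin 3) (hu : u j₀ ≠ 0) :
    ∃ μ : ℂ, Rᵀ *ᵥ t = μ • u := by
  have hN : ∀ i j, R i j + t i * u j = c * R' i j := by
    intro i j
    have e := congrFun (congrFun h i) j.castSucc
    simp [camMat, hmat, mul_apply, Fin.sum_univ_castSucc, Matrix.one_apply,
      Finset.sum_ite_eq, mul_comm, snoc_three] at e
    linear_combination e
  set v : Fin 3 → ℂ := Rᵀ *ᵥ t with hv
  have hvdef : ∀ j, v j = ∑ k, R k j * t k := by
    intro j
    simp [hv, mulVec, dotProduct, transpose_apply]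
  set τ : ℂ := ∑ k, t k * t k with hτ
  set e : ℂ := c * c - 1 with he
  -- key entrywise equation
  have E : ∀ i j, u i * v j + u j * v i + τ * (u i * u j)
      = e * (if i = j then 1 else 0) := by
    intro i j
    have horth : ∑ k, R k i * R k j = (if i = j then 1 else 0) := by
      have := congrFun (congrFun hR.2.1 i) j
      simpa [mul_apply, transpose_apply, Matrix.one_apply] using this
    have horth' : ∑ k, R' k i * R' k j = (if i = j then 1 else 0) := by
      have := congrFun (congrFun hR'.2.1 i) j
      simpa [mul_apply, transpose_apply, Matrix.one_apply] using this
    have h1 : ∑ k, (R k i + t k * u i) * (R k j + t k * u j)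
        = c * c * (if i = j then 1 else 0) := by
      calc ∑ k, (R k i + t k * u i) * (R k j + t k * u j)
          = ∑ k, (c * R' k i) * (c * R' k j) := by
            refine Finset.sum_congr rfl fun k _ => ?_
            rw [hN k i, hN k j]
        _ = c * c * ∑ k, R' k i * R' k j := by
            rw [Finset.mul_sum]; refine Finset.sum_congr rfl fun k _ => ?_; ring
        _ = c * c * (if i = j then 1 else 0) := by rw [horth']
    rw [hvdef, hvdef, hτ, he]
    simp only [Fin.sum_univ_three] at h1 horth ⊢
    linear_combination h1 - horth
  -- star equation
  have star : ∀ i m, u m * (u j₀ * v i - u i * v j₀)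
      = e * ((if i = m then 1 else 0) * u j₀ - (if j₀ = m then 1 else 0) * u i) := by
    intro i m
    linear_combination u j₀ * (E i m) - u i * (E j₀ m)
  have exm : ∀ i j : Fin 3, ∃ m, m ≠ i ∧ m ≠ j := by decide
  have D : ∀ i, u j₀ * v i - u i * v j₀ = 0 := by
    intro i
    by_cases hij : i = j₀
    · subst hij; ring
    · obtain ⟨m, hmi, hmj⟩ := exm i j₀
      have Bm := star m i
      have Cm := star m m
      have Bj := star i j₀
      rw [if_neg hmi, if_neg (Ne.symm hij)] at Bm
      rw [if_pos rfl, if_neg (Ne.symm hmj)] at Cm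
      rw [if_neg hij, if_pos rfl] at Bj
      have h2 : e * u i * u j₀ = 0 := by linear_combination u m * Bm - u i * Cm
      have h3 : e * u i = 0 := by
        rcases mul_eq_zero.1 h2 with h | h
        · exact h
        · exact absurd h hu
      have h4 : u j₀ * (u j₀ * v i - u i * v j₀) = 0 := by
        linear_combination Bj - h3
      rcases mul_eq_zero.1 h4 with h | h
      · exact absurd h hu
      · exact h
  refine ⟨v j₀ / u j₀, funext fun i => ?_⟩
  have := D i
  rw [Pi.smul_apply, smul_eq_mul, div_mul_eq_mul_div, eq_div_iff hu]
  linear_combination this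

theorem stmt_13 (R₂ R₃ R₂' R₃' : Matrix (Fin 3) (Fin 3) ℂ)
    (t₂ t₃ t₂' t₃' : Fin 3 → ℂ)
    (hR₂ : SO3 R₂) (hR₃ : SO3 R₃) (hR₂' : SO3 R₂') (hR₃' : SO3 R₃')
    (u : Fin 3 → ℂ) (lam : ℂ) (hlam : lam ≠ 0)
    (hB : ∃ c : ℂ, c ≠ 0 ∧ camMat R₂ t₂ * hmat u lam = c • camMat R₂' t₂')
    (hC : ∃ c : ℂ, c ≠ 0 ∧ camMat R₃ t₃ * hmat u lam = c • camMat R₃' t₃')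
    (hind : LinearIndependent ℂ ![center 1 0, center R₂ t₂, center R₃ t₃]) :
    u = 0 := by
  by_contra hu0
  obtain ⟨j₀, hj⟩ : ∃ j, u j ≠ 0 := by
    by_contra h; push_neg at h; exact hu0 (funext h)
  obtain ⟨c₂, hc₂, h₂⟩ := hB
  obtain ⟨c₃, hc₃, h₃⟩ := hC
  obtain ⟨μ₂, hμ₂⟩ := keylem R₂ R₂' t₂ t₂' u lam c₂ hR₂ hR₂' hc₂ h₂ j₀ hj
  obtain ⟨μ₃, hμ₃⟩ := keylem R₃ R₃' t₃ t₃' u lam c₃ hR₃ hR₃' hc₃ h₃ j₀ hj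
  have hc0 : center 1 0 = Fin.snoc (0 : Fin 3 → ℂ) 1 := by
    simp [center]
  have hcB : center R₂ t₂ = Fin.snoc (-(μ₂ • u)) 1 := by rw [center, hμ₂]
  have hcC : center R₃ t₃ = Fin.snoc (-(μ₃ • u)) 1 := by rw [center, hμ₃]
  rw [Fintype.linearIndependent_iff] at hind
  by_cases hm : μ₂ = 0
  · have hsum : ∑ i : Fin 3, (![1, -1, 0] : Fin 3 → ℂ) i •
        ![center 1 0, center R₂ t₂, center R₃ t₃] i = 0 := by
      rw [Fin.sum_univ_three]
      simp only [Matrix.cons_val_zero, Matrix.cons_val_one, Matrix.head_cons,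
        Matrix.cons_val_two, Matrix.tail_cons]
      rw [hc0, hcB, hcC, hm]
      funext x
      refine Fin.lastCases ?_ (fun j => ?_) x <;>
        simp [Fin.snoc_castSucc, Fin.snoc_last]
    have h0 := hind ![1, -1, 0] hsum 0
    simp at h0
  · have hsum : ∑ i : Fin 3, (![μ₂ - μ₃, μ₃, -μ₂] : Fin 3 → ℂ) i •
        ![center 1 0, center R₂ t₂, center R₃ t₃] i = 0 := by
      rw [Fin.sum_univ_three]
      simp only [Matrix.cons_val_zero, Matrix.cons_val_one, Matrix.head_cons,
        Matrix.cons_val_two, Matrix.tail_cons]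
      rw [hc0, hcB, hcC]
      funext x
      refine Fin.lastCases ?_ (fun j => ?_) x <;>
        simp [Fin.snoc_castSucc, Fin.snoc_last, snoc_three] <;> ring
    have h0 := hind ![μ₂ - μ₃, μ₃, -μ₂] hsum 2
    simp at h0
    exact hm h0
end
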